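/- If (ũ,s̃,φ̃) solves the dDS system and G : ℝ → ℝ is C², then, setting u(x,y,t) = ũ(x+εG(t), y, t), s(x,y,t) = s̃(x+εG(t),y,t) − ε(x + (ε/2)G(t))G'(t), and φ(x,y,t) = φ̃(x+εG(t),y,t) − (ε/δ)(x + (ε/2)G(t))G''(t), the triple (u,s,φ) also solves the dDS system. -/

import Mathlib

noncomputable section

/-- Partial derivative in the first (x) argument. -/
def px (f : ℝ → ℝ → ℝ → ℝ) : ℝ → ℝ → ℝ → ℝ :=
  fun x y t => deriv (fun x' => f x' y t) x

/-- Partial derivative in the second (y) argument. -/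
def py (f : ℝ → ℝ → ℝ → ℝ) : ℝ → ℝ → ℝ → ℝ :=
  fun x y t => deriv (fun y' => f x y' t) y

/-- Partial derivative in the third (t) argument. -/
def pt (f : ℝ → ℝ → ℝ → ℝ) : ℝ → ℝ → ℝ → ℝ :=
  fun x y t => deriv (fun t' => f x y t') t

namespace DSaux

variable {f : ℝ → ℝ → ℝ → ℝ}

abbrev unc (f : ℝ → ℝ → ℝ → ℝ) : ℝ × ℝ × ℝ → ℝ := fun p => f p.1 p.2.1 p.2.2

lemma curve_x (y t x : ℝ) : HasDerivAt (fun x' : ℝ => ((x', y, t) : ℝ × ℝ × ℝ)) (1, 0, 0) x :=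
  (hasDerivAt_id x).prodMk ((hasDerivAt_const x y).prodMk (hasDerivAt_const x t))

lemma curve_y (x t y : ℝ) : HasDerivAt (fun y' : ℝ => ((x, y', t) : ℝ × ℝ × ℝ)) (0, 1, 0) y :=
  (hasDerivAt_const y x).prodMk ((hasDerivAt_id y).prodMk (hasDerivAt_const y t))

lemma curve_t (x y t : ℝ) : HasDerivAt (fun t' : ℝ => ((x, y, t') : ℝ × ℝ × ℝ)) (0, 0, 1) t :=
  (hasDerivAt_const t x).prodMk ((hasDerivAt_const t y).prodMk (hasDerivAt_id t))

lemma slice_x (hf : ContDiff ℝ (⊤ : ℕ∞) (unc f)) (x y t : ℝ) :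
    HasDerivAt (fun x' => f x' y t) (fderiv ℝ (unc f) (x, y, t) (1, 0, 0)) x :=
  by have := ((hf.differentiable (by simp) (x, y, t)).hasFDerivAt).comp_hasDerivAt x (curve_x y t x); exact this

lemma slice_y (hf : ContDiff ℝ (⊤ : ℕ∞) (unc f)) (x y t : ℝ) :
    HasDerivAt (fun y' => f x y' t) (fderiv ℝ (unc f) (x, y, t) (0, 1, 0)) y :=
  by have := ((hf.differentiable (by simp) (x, y, t)).hasFDerivAt).comp_hasDerivAt y (curve_y x t y); exact this

lemma slice_t (hf : ContDiff ℝ (⊤ : ℕ∞) (unc f)) (x y t : ℝ) :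
    HasDerivAt (fun t' => f x y t') (fderiv ℝ (unc f) (x, y, t) (0, 0, 1)) t :=
  by have := ((hf.differentiable (by simp) (x, y, t)).hasFDerivAt).comp_hasDerivAt t (curve_t x y t); exact this

lemma px_eq (hf : ContDiff ℝ (⊤ : ℕ∞) (unc f)) (x y t : ℝ) : px f x y t = fderiv ℝ (unc f) (x, y, t) (1, 0, 0) :=
  (slice_x hf x y t).deriv

lemma py_eq (hf : ContDiff ℝ (⊤ : ℕ∞) (unc f)) (x y t : ℝ) : py f x y t = fderiv ℝ (unc f) (x, y, t) (0, 1, 0) :=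
  (slice_y hf x y t).deriv

lemma pt_eq (hf : ContDiff ℝ (⊤ : ℕ∞) (unc f)) (x y t : ℝ) : pt f x y t = fderiv ℝ (unc f) (x, y, t) (0, 0, 1) :=
  (slice_t hf x y t).deriv

lemma hasDerivAt_px (hf : ContDiff ℝ (⊤ : ℕ∞) (unc f)) (x y t : ℝ) : HasDerivAt (fun x' => f x' y t) (px f x y t) x := by
  rw [px_eq hf]; exact slice_x hf x y t

lemma hasDerivAt_py (hf : ContDiff ℝ (⊤ : ℕ∞) (unc f)) (x y t : ℝ) : HasDerivAt (fun y' => f x y' t) (py f x y t) y := by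
  rw [py_eq hf]; exact slice_y hf x y t

lemma diff_x (hf : ContDiff ℝ (⊤ : ℕ∞) (unc f)) (x y t : ℝ) : DifferentiableAt ℝ (fun x' => f x' y t) x :=
  (slice_x hf x y t).differentiableAt

lemma smooth_px (hf : ContDiff ℝ (⊤ : ℕ∞) (unc f)) : ContDiff ℝ (⊤ : ℕ∞) (unc (px f)) := by
  have h : unc (px f) = fun p : ℝ × ℝ × ℝ => fderiv ℝ (unc f) p ((1:ℝ), (0:ℝ), (0:ℝ)) := by
    funext p
    have := px_eq hf p.1 p.2.1 p.2.2
    simpa using this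
  rw [h]
  exact ((ContinuousLinearMap.apply ℝ ℝ ((1:ℝ), (0:ℝ), (0:ℝ))).contDiff).comp
    (hf.fderiv_right (by simp))

/-- chain rule along the shifted time-curve -/
lemma chain_t (hf : ContDiff ℝ (⊤ : ℕ∞) (unc f)) {G : ℝ → ℝ} (hGd : Differentiable ℝ G) (ε x y t : ℝ) :
    HasDerivAt (fun t' => f (x + ε * G t') y t')
      (pt f (x + ε * G t) y t + ε * deriv G t * px f (x + ε * G t) y t) t := by
  set X := x + ε * G t with hX
  set L := fderiv ℝ (unc f) (X, y, t) with hL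
  have hγ : HasDerivAt (fun t' : ℝ => ((x + ε * G t', y, t') : ℝ × ℝ × ℝ))
      (ε * deriv G t, 0, 1) t := by
    exact ((((hGd t).hasDerivAt).const_mul ε).const_add x).prodMk
      ((hasDerivAt_const t y).prodMk (hasDerivAt_id t))
  have hF := ((hf.differentiable (by simp) (X, y, t)).hasFDerivAt)
  have hc : HasDerivAt (fun t' => f (x + ε * G t') y t') (L (ε * deriv G t, 0, 1)) t :=
    by have := hF.comp_hasDerivAt t hγ; exact this
  have hv : ((ε * deriv G t, 0, 1) : ℝ × ℝ × ℝ)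
      = (ε * deriv G t) • ((1:ℝ), (0:ℝ), (0:ℝ)) + ((0:ℝ), (0:ℝ), (1:ℝ)) := by
    simp [Prod.ext_iff]
  have : L (ε * deriv G t, 0, 1)
      = pt f X y t + ε * deriv G t * px f X y t := by
    rw [hv, map_add, map_smul, smul_eq_mul, px_eq hf, pt_eq hf, hL]
    ring
  rwa [this] at hc

end DSaux

/-- The dispersionless Davey–Stewartson system at a point (x,y,t):
u_t + (u s_x)_x + σ(u s_y)_y = 0,
s_t + (1/2)(s_x² + σ s_y²) − δφ = 0,
σφ_yy − φ_xx + u_xx + σu_yy = 0. -/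
def dDSeq (σ δ : ℝ) (u s φ : ℝ → ℝ → ℝ → ℝ) (x y t : ℝ) : Prop :=
  pt u x y t + px (fun x y t => u x y t * px s x y t) x y t
      + σ * py (fun x y t => u x y t * py s x y t) x y t = 0 ∧
  pt s x y t + (1/2) * ((px s x y t) ^ 2 + σ * (py s x y t) ^ 2) - δ * φ x y t = 0 ∧
  σ * py (py φ) x y t - px (px φ) x y t + px (px u) x y t + σ * py (py u) x y t = 0

open DSaux in
/-- Galilei-type gauge symmetry generated by Y(G): if (ũ,s̃,φ̃) solves the dDS system
and G is C², then u(x,y,t) = ũ(x+εG(t),y,t),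
s(x,y,t) = s̃(x+εG(t),y,t) − ε(x + (ε/2)G(t))G'(t),
φ(x,y,t) = φ̃(x+εG(t),y,t) − (ε/δ)(x + (ε/2)G(t))G''(t) also solves it. -/
theorem stmt_18 (σ δ ε : ℝ) (hσ : σ = 1 ∨ σ = -1) (hδ : δ ≠ 0)
    (G : ℝ → ℝ) (hG : ContDiff ℝ 2 G)
    (ut st φt : ℝ → ℝ → ℝ → ℝ)
    (hsm_u : ContDiff ℝ (⊤ : ℕ∞) (fun p : ℝ × ℝ × ℝ => ut p.1 p.2.1 p.2.2))
    (hsm_s : ContDiff ℝ (⊤ : ℕ∞) (fun p : ℝ × ℝ × ℝ => st p.1 p.2.1 p.2.2))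
    (hsm_φ : ContDiff ℝ (⊤ : ℕ∞) (fun p : ℝ × ℝ × ℝ => φt p.1 p.2.1 p.2.2))
    (hsol : ∀ x y t : ℝ, dDSeq σ δ ut st φt x y t)
    (u s φ : ℝ → ℝ → ℝ → ℝ)
    (hu : ∀ x y t, u x y t = ut (x + ε * G t) y t)
    (hs : ∀ x y t, s x y t
      = st (x + ε * G t) y t - ε * (x + (ε/2) * G t) * deriv G t)
    (hφ : ∀ x y t, φ x y t
      = φt (x + ε * G t) y t - (ε/δ) * (x + (ε/2) * G t) * deriv (deriv G) t) :
    ∀ x y t : ℝ, dDSeq σ δ u s φ x y t := by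
  have hGd : Differentiable ℝ G := hG.differentiable (by norm_num)
  have hG2 : ContDiff ℝ ((1:ℕ∞)+1) G := by exact_mod_cast hG
  have hGd' : Differentiable ℝ (deriv G) :=
    (contDiff_succ_iff_deriv.mp hG2).2.2.differentiable (by norm_num)
  intro x y t
  -- first partials of u
  have hu_x : ∀ a b c, px u a b c = px ut (a + ε * G c) b c := by
    intro a b c
    have he : (fun x' => u x' b c) = fun x' => ut (x' + ε * G c) b c :=
      funext fun x' => hu x' b c
    show deriv (fun x' => u x' b c) a = deriv (fun x' => ut x' b c) (a + ε * G c)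
    rw [he]; exact deriv_comp_add_const (fun x' => ut x' b c) (ε * G c) a
  have hu_y : ∀ a b c, py u a b c = py ut (a + ε * G c) b c := by
    intro a b c
    show deriv (fun y' => u a y' c) b = deriv (fun y' => ut (a + ε * G c) y' c) b
    congr 1; funext y'; exact hu a y' c
  have hu_t : pt u x y t
      = pt ut (x + ε * G t) y t + ε * deriv G t * px ut (x + ε * G t) y t := by
    have he : (fun t' => u x y t') = fun t' => ut (x + ε * G t') y t' :=
      funext fun t' => hu x y t'
    show deriv (fun t' => u x y t') t = _
    rw [he]; exact (chain_t hsm_u hGd ε x y t).deriv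
  -- first partials of s
  have hs_x : ∀ a b c, px s a b c = px st (a + ε * G c) b c - ε * deriv G c := by
    intro a b c
    have h1 : HasDerivAt (fun x' => st (x' + ε * G c) b c) (px st (a + ε * G c) b c) a := by
      have := (hasDerivAt_px hsm_s (a + ε * G c) b c).comp a
        ((hasDerivAt_id a).add_const (ε * G c))
      simpa [Function.comp_def] using this
    have h2 : HasDerivAt (fun x' : ℝ => ε * (x' + (ε/2) * G c) * deriv G c)
        (ε * deriv G c) a := by
      have heq : (fun x' : ℝ => ε * (x' + (ε/2) * G c) * deriv G c)
          = fun x' : ℝ => (x' + (ε/2) * G c) * (ε * deriv G c) := by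
        funext x'; ring
      rw [heq]
      simpa using ((hasDerivAt_id a).add_const ((ε/2) * G c)).mul_const (ε * deriv G c)
    have he : (fun x' => s x' b c)
        = fun x' => st (x' + ε * G c) b c - ε * (x' + (ε/2) * G c) * deriv G c :=
      funext fun x' => hs x' b c
    show deriv (fun x' => s x' b c) a = _
    rw [he]; exact (h1.sub h2).deriv
  have hs_y : ∀ a b c, py s a b c = py st (a + ε * G c) b c := by
    intro a b c
    have he : (fun y' => s a y' c)
        = fun y' => st (a + ε * G c) y' c - ε * (a + (ε/2) * G c) * deriv G c :=
      funext fun y' => hs a y' c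
    show deriv (fun y' => s a y' c) b = deriv (fun y' => st (a + ε * G c) y' c) b
    rw [he]; exact deriv_sub_const _
  have hs_t : pt s x y t
      = (pt st (x + ε * G t) y t + ε * deriv G t * px st (x + ε * G t) y t)
        - ε * ((ε/2) * deriv G t * deriv G t
            + (x + (ε/2) * G t) * deriv (deriv G) t) := by
    have h1 := chain_t hsm_s hGd ε x y t
    have h2 : HasDerivAt (fun t' : ℝ => ε * (x + (ε/2) * G t') * deriv G t')
        (ε * ((ε/2) * deriv G t * deriv G t
            + (x + (ε/2) * G t) * deriv (deriv G) t)) t := by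
      have ha : HasDerivAt (fun t' : ℝ => x + (ε/2) * G t') ((ε/2) * deriv G t) t :=
        (((hGd t).hasDerivAt).const_mul (ε/2)).const_add x
      have hb : HasDerivAt (deriv G) (deriv (deriv G) t) t := (hGd' t).hasDerivAt
      have h2' := (ha.mul hb).const_mul ε
      have heq2 : (fun t' : ℝ => ε * (x + (ε/2) * G t') * deriv G t')
          = fun t' => ε * ((x + (ε/2) * G t') * deriv G t') := by funext t'; ring
      rw [heq2]
      exact h2'
    have he : (fun t' => s x y t')
        = fun t' => st (x + ε * G t') y t' - ε * (x + (ε/2) * G t') * deriv G t' :=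
      funext fun t' => hs x y t'
    show deriv (fun t' => s x y t') t = _
    rw [he]; exact (h1.sub h2).deriv
  -- first partials of φ
  have hφ_x : ∀ a b c, px φ a b c
      = px φt (a + ε * G c) b c - (ε/δ) * deriv (deriv G) c := by
    intro a b c
    have h1 : HasDerivAt (fun x' => φt (x' + ε * G c) b c) (px φt (a + ε * G c) b c) a := by
      have := (hasDerivAt_px hsm_φ (a + ε * G c) b c).comp a
        ((hasDerivAt_id a).add_const (ε * G c))
      simpa [Function.comp_def] using this
    have h2 : HasDerivAt (fun x' : ℝ => (ε/δ) * (x' + (ε/2) * G c) * deriv (deriv G) c)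
        ((ε/δ) * deriv (deriv G) c) a := by
      have heq : (fun x' : ℝ => (ε/δ) * (x' + (ε/2) * G c) * deriv (deriv G) c)
          = fun x' : ℝ => (x' + (ε/2) * G c) * ((ε/δ) * deriv (deriv G) c) := by
        funext x'; ring
      rw [heq]
      simpa using
        ((hasDerivAt_id a).add_const ((ε/2) * G c)).mul_const ((ε/δ) * deriv (deriv G) c)
    have he : (fun x' => φ x' b c)
        = fun x' => φt (x' + ε * G c) b c - (ε/δ) * (x' + (ε/2) * G c) * deriv (deriv G) c :=
      funext fun x' => hφ x' b c
    show deriv (fun x' => φ x' b c) a = _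
    rw [he]; exact (h1.sub h2).deriv
  have hφ_y : ∀ a b c, py φ a b c = py φt (a + ε * G c) b c := by
    intro a b c
    have he : (fun y' => φ a y' c)
        = fun y' => φt (a + ε * G c) y' c - (ε/δ) * (a + (ε/2) * G c) * deriv (deriv G) c :=
      funext fun y' => hφ a y' c
    show deriv (fun y' => φ a y' c) b = deriv (fun y' => φt (a + ε * G c) y' c) b
    rw [he]; exact deriv_sub_const _
  -- second partials
  have hu_xx : px (px u) x y t = px (px ut) (x + ε * G t) y t := by
    have he : (fun a => px u a y t) = fun a => px ut (a + ε * G t) y t :=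
      funext fun a => hu_x a y t
    show deriv (fun a => px u a y t) x = deriv (fun a => px ut a y t) (x + ε * G t)
    rw [he]; exact deriv_comp_add_const (fun a => px ut a y t) (ε * G t) x
  have hu_yy : py (py u) x y t = py (py ut) (x + ε * G t) y t := by
    show deriv (fun b => py u x b t) y = deriv (fun b => py ut (x + ε * G t) b t) y
    congr 1; funext b; exact hu_y x b t
  have hφ_xx : px (px φ) x y t = px (px φt) (x + ε * G t) y t := by
    have he : (fun a => px φ a y t)
        = fun a => px φt (a + ε * G t) y t - (ε/δ) * deriv (deriv G) t :=
      funext fun a => hφ_x a y t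
    show deriv (fun a => px φ a y t) x = deriv (fun a => px φt a y t) (x + ε * G t)
    rw [he, deriv_sub_const]; exact deriv_comp_add_const (fun a => px φt a y t) (ε * G t) x
  have hφ_yy : py (py φ) x y t = py (py φt) (x + ε * G t) y t := by
    show deriv (fun b => py φ x b t) y = deriv (fun b => py φt (x + ε * G t) b t) y
    congr 1; funext b; exact hφ_y x b t
  -- product terms
  have hP1 : px (fun a b c => u a b c * px s a b c) x y t
      = px (fun a b c => ut a b c * px st a b c) (x + ε * G t) y t
        - ε * deriv G t * px ut (x + ε * G t) y t := by
    have hADq : HasDerivAt (fun z => ut z y t * px st z y t)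
        (px (fun a b c => ut a b c * px st a b c) (x + ε * G t) y t) (x + ε * G t) := by
      have hd1 : DifferentiableAt ℝ (fun z => ut z y t * px st z y t) (x + ε * G t) :=
        (diff_x hsm_u _ y t).mul (diff_x (smooth_px hsm_s) _ y t)
      exact hd1.hasDerivAt
    have h1 : HasDerivAt (fun a : ℝ => ut (a + ε * G t) y t * px st (a + ε * G t) y t)
        (px (fun a b c => ut a b c * px st a b c) (x + ε * G t) y t) x := by
      have := hADq.comp x ((hasDerivAt_id x).add_const (ε * G t))
      simpa [Function.comp_def] using this
    have hu' : HasDerivAt (fun a : ℝ => ut (a + ε * G t) y t) (px ut (x + ε * G t) y t) x := by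
      have := (hasDerivAt_px hsm_u (x + ε * G t) y t).comp x
        ((hasDerivAt_id x).add_const (ε * G t))
      simpa [Function.comp_def] using this
    have h2 : HasDerivAt (fun a : ℝ => (ε * deriv G t) * ut (a + ε * G t) y t)
        ((ε * deriv G t) * px ut (x + ε * G t) y t) x := hu'.const_mul _
    have heq : (fun a => u a y t * px s a y t)
        = fun a => ut (a + ε * G t) y t * px st (a + ε * G t) y t
            - (ε * deriv G t) * ut (a + ε * G t) y t := by
      funext a; rw [hu, hs_x]; ring
    show deriv (fun a => u a y t * px s a y t) x = _
    rw [heq]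
    exact (h1.sub h2).deriv
  have hP2 : py (fun a b c => u a b c * py s a b c) x y t
      = py (fun a b c => ut a b c * py st a b c) (x + ε * G t) y t := by
    show deriv (fun b => u x b t * py s x b t) y = _
    have heq : (fun b => u x b t * py s x b t)
        = fun b => ut (x + ε * G t) b t * py st (x + ε * G t) b t := by
      funext b; rw [hu, hs_y]
    rw [heq]; rfl
  obtain ⟨e1, e2, e3⟩ := hsol (x + ε * G t) y t
  refine ⟨?_, ?_, ?_⟩
  · rw [hu_t, hP1, hP2]
    linear_combination e1
  · rw [hs_t, hs_x, hs_y, hφ x y t]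
    have hcancel : δ * (ε/δ) = ε := by field_simp
    linear_combination e2 + (x + (ε/2) * G t) * deriv (deriv G) t * hcancel
  · rw [hφ_xx, hφ_yy, hu_xx, hu_yy]
    linear_combination e3
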